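/- For every n ≥ 1, τ₊(2^(2^n) − 1) ≤ 2n, where τ₊(z) is the minimal length of an addition–multiplication chain (operations + and × only, starting from 1) computing z. This follows from the identity F_n − 2 = F_{n−1} · (F_{n−1} − 2) for Fermat numbers F_i = 2^(2^i) + 1. -/

import Mathlib

/-- `Computes l z` : there is an addition–multiplication chain of length `l`
(operations `+` and `×` only), starting from the constant `1`, whose final
register equals `z`. -/
def Computes (l : ℕ) (z : ℤ) : Prop :=
  ∃ a : ℕ → ℤ, a 0 = 1 ∧
    (∀ i, 1 ≤ i → i ≤ l → ∃ j k, j < i ∧ k < i ∧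
      (a i = a j + a k ∨ a i = a j * a k)) ∧
    a l = z

/-- `τ₊ z` : minimal length of an addition–multiplication chain computing `z`. -/
noncomputable def tauPlus (z : ℤ) : ℕ := sInf {l : ℕ | Computes l z}

/-! The chain `1, 2, 3, 5, 15, 17, 255, …` alternates the Fermat numbers `F_k` and `F_k - 2`:
adding `2` turns `F_k - 2` into `F_k`, and multiplying gives `F_k (F_k - 2) = F_{k+1} - 2`.
So `F_n - 2 = 2 ^ 2 ^ n - 1` is reached after `2n` steps. -/

theorem pow_two_pow_succ_sub_one {R : Type*} [CommRing R] (x : R) (k : ℕ) :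
    x ^ 2 ^ (k + 1) - 1 = (x ^ 2 ^ k + 1) * (x ^ 2 ^ k - 1) := by
  rw [pow_succ, pow_mul]
  ring

/-- Position `2k` holds `F_k - 2`, position `2k + 1` holds `F_k`, except that position `1`
holds `2` rather than `F_0 = 3`. -/
def fermatChain (i : ℕ) : ℤ :=
  if i = 1 then 2 else 2 ^ 2 ^ (i / 2) - (-1) ^ i

theorem fermatChain_one : fermatChain 1 = 2 := rfl

theorem fermatChain_two_mul (k : ℕ) : fermatChain (2 * k) = 2 ^ 2 ^ k - 1 := by
  simp [fermatChain, show 2 * k ≠ 1 by omega, pow_mul]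

theorem fermatChain_two_mul_add_one {k : ℕ} (hk : k ≠ 0) :
    fermatChain (2 * k + 1) = 2 ^ 2 ^ k + 1 := by
  simp [fermatChain, hk, pow_succ, pow_mul, Nat.mul_add_div]

theorem fermatChain_step {i : ℕ} (hi : 1 ≤ i) : ∃ j k, j < i ∧ k < i ∧
    (fermatChain i = fermatChain j + fermatChain k ∨
      fermatChain i = fermatChain j * fermatChain k) := by
  obtain ⟨k, rfl | rfl⟩ := Nat.even_or_odd' i
  · obtain ⟨m, rfl⟩ : ∃ m, k = m + 1 := ⟨k - 1, by omega⟩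
    rcases Nat.eq_zero_or_pos m with rfl | hm
    · exact ⟨1, 0, by omega, by omega, Or.inl (by decide)⟩
    refine ⟨2 * m + 1, 2 * m, by omega, by omega, Or.inr ?_⟩
    rw [fermatChain_two_mul (m + 1), fermatChain_two_mul_add_one hm.ne', fermatChain_two_mul,
      pow_two_pow_succ_sub_one]
  · rcases Nat.eq_zero_or_pos k with rfl | hk
    · exact ⟨0, 0, by omega, by omega, Or.inl (by decide)⟩
    refine ⟨2 * k, 1, by omega, by omega, Or.inl ?_⟩
    rw [fermatChain_two_mul_add_one hk.ne', fermatChain_two_mul, fermatChain_one]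
    ring

theorem tauPlus_fermat_minus_one_general (n : ℕ) :
    tauPlus ((2 : ℤ) ^ (2 ^ n) - 1) ≤ 2 * n :=
  Nat.sInf_le ⟨fermatChain, fermatChain_two_mul 0, fun _ hi _ ↦ fermatChain_step hi,
    fermatChain_two_mul n⟩

theorem tauPlus_fermat_minus_one (n : ℕ) (hn : 1 ≤ n) :
    tauPlus ((2 : ℤ) ^ (2 ^ n) - 1) ≤ 2 * n :=
  tauPlus_fermat_minus_one_general n
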